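/- For real s > 1, Γ(s)·L(s,χ) = ∫₀^∞ t^{s-1}/(2·cosh t) dt, where χ is the nontrivial Dirichlet character mod 4. -/

import Mathlib

/-- The nontrivial Dirichlet character mod 4, as a function on ℕ. -/
def chi4 (d : ℕ) : ℝ :=
  if d % 4 = 1 then 1 else if d % 4 = 3 then -1 else 0

/-!
For `t > 0`, `1 / (2 cosh t) = e^{-t} / (1 + e^{-2t}) = ∑ χ(n) e^{-nt}`. Integrating term by term
against `t^{s-1}`, the `n`-th term contributes `Γ(s) χ(n) n^{-s}`; for `s > 1` the series of
absolute values converges, which justifies the exchange (this is Mathlib's `hasSum_mellin`).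
-/

open Real Set MeasureTheory

lemma abs_chi4_le_one (d : ℕ) : |chi4 d| ≤ 1 := by
  unfold chi4
  split_ifs <;> norm_num

lemma chi4_two_mul (m : ℕ) : chi4 (2 * m) = 0 := by
  unfold chi4
  rw [if_neg (by omega), if_neg (by omega)]

lemma chi4_two_mul_add_one (k : ℕ) : chi4 (2 * k + 1) = (-1) ^ k := by
  rcases Nat.even_or_odd k with ⟨m, rfl⟩ | ⟨m, rfl⟩
  · rw [chi4, if_pos (by omega), Even.neg_one_pow ⟨m, rfl⟩]
  · rw [chi4, if_neg (by omega), if_pos (by omega), Odd.neg_one_pow ⟨m, rfl⟩]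

lemma hasSum_chi4_mul_pow {x : ℝ} (hx : |x| < 1) :
    HasSum (fun n : ℕ ↦ chi4 (n + 1) * x ^ (n + 1)) (x / (1 + x ^ 2)) := by
  have hx2 : ‖-x ^ 2‖ < 1 := by
    rw [norm_neg, norm_pow, Real.norm_eq_abs]
    exact pow_lt_one₀ (abs_nonneg x) hx two_ne_zero
  have heven : HasSum (fun k : ℕ ↦ chi4 (2 * k + 1) * x ^ (2 * k + 1)) (x / (1 + x ^ 2)) := by
    have h := (hasSum_geometric_of_norm_lt_one hx2).mul_left x
    rw [sub_neg_eq_add, ← div_eq_mul_inv] at h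
    refine h.congr_fun fun k ↦ ?_
    rw [chi4_two_mul_add_one, neg_pow, pow_succ, pow_mul]
    ring
  have hodd : HasSum (fun k : ℕ ↦ chi4 (2 * k + 1 + 1) * x ^ (2 * k + 1 + 1)) 0 := by
    simpa only [show ∀ k, 2 * k + 1 + 1 = 2 * (k + 1) from fun k ↦ by ring, chi4_two_mul,
      zero_mul] using hasSum_zero
  have h := HasSum.even_add_odd (f := fun n ↦ chi4 (n + 1) * x ^ (n + 1)) heven hodd
  rwa [add_zero] at h

lemma hasSum_chi4_mul_exp {t : ℝ} (ht : 0 < t) :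
    HasSum (fun n : ℕ ↦ chi4 (n + 1) * rexp (-(n + 1 : ℝ) * t)) (1 / (2 * cosh t)) := by
  have hx : |rexp (-t)| < 1 := by
    rw [abs_of_pos (exp_pos _), exp_lt_one_iff]
    linarith
  have hval : rexp (-t) / (1 + rexp (-t) ^ 2) = 1 / (2 * cosh t) := by
    rw [cosh_eq, ← exp_nat_mul]
    field_simp
    rw [mul_add, ← exp_add, ← exp_add, neg_add_cancel, exp_zero]
    ring_nf
  have h := hasSum_chi4_mul_pow hx
  rw [hval] at h
  refine h.congr_fun fun n ↦ ?_
  rw [← exp_nat_mul]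
  push_cast
  ring_nf

lemma summable_abs_chi4_div_rpow {s : ℝ} (hs : 1 < s) :
    Summable fun n : ℕ ↦ |chi4 (n + 1)| / ((n : ℝ) + 1) ^ s := by
  refine ((Real.summable_one_div_nat_add_rpow 1 s).mpr hs).of_nonneg_of_le
    (fun n ↦ by positivity) fun n ↦ ?_
  rw [abs_of_pos (by positivity : (0 : ℝ) < n + 1)]
  exact div_le_div_of_nonneg_right (abs_chi4_le_one _) (by positivity)

lemma mellin_ofReal (f : ℝ → ℝ) (s : ℝ) :
    mellin (fun t ↦ (f t : ℂ)) s = ((∫ t in Ioi 0, t ^ (s - 1) * f t : ℝ) : ℂ) := by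
  rw [mellin, ← integral_complex_ofReal]
  refine setIntegral_congr_fun measurableSet_Ioi fun t ht ↦ ?_
  rw [smul_eq_mul, Complex.ofReal_mul, Complex.ofReal_cpow ht.le]
  push_cast
  rfl

theorem gamma_mul_L_eq_integral (s : ℝ) (hs : 1 < s) :
    Real.Gamma s * ∑' n : ℕ, chi4 (n + 1) * ((n : ℝ) + 1) ^ (-s) =
      ∫ t in Set.Ioi (0 : ℝ), t ^ (s - 1) / (2 * Real.cosh t) := by
  have hmellin := hasSum_mellin (a := fun n : ℕ ↦ (chi4 (n + 1) : ℂ))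
    (p := fun n ↦ (n : ℝ) + 1) (F := fun t ↦ ((1 / (2 * cosh t) : ℝ) : ℂ)) (s := s)
    (fun n ↦ Or.inr (by positivity)) (by simpa using zero_lt_one.trans hs)
    (fun t ht ↦ by exact_mod_cast Complex.hasSum_ofReal.mpr (hasSum_chi4_mul_exp ht))
    (by simpa using summable_abs_chi4_div_rpow hs)
  rw [mellin_ofReal] at hmellin
  simp_rw [mul_one_div] at hmellin
  apply Complex.ofReal_injective
  rw [← hmellin.tsum_eq, Complex.ofReal_mul, Complex.ofReal_tsum, ← tsum_mul_left,
    Complex.Gamma_ofReal]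
  refine tsum_congr fun n ↦ ?_
  rw [Complex.ofReal_mul, Complex.ofReal_cpow (by positivity), Complex.ofReal_neg,
    Complex.cpow_neg]
  ring
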